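/- Let F be the pushforward of the semicircle law on [−2,2] under x ↦ x². Then for every real z > 4, the Stieltjes transform of F satisfies ∫ 1/(x − z) dF(x) = −1/2 + √(1/4 − 1/z). -/

import Mathlib

open MeasureTheory

/-- The semicircle law: the probability measure on `ℝ` with density
`(1/(2π))√(4-x²)` on `[-2,2]`. -/
noncomputable def semicircleLaw : Measure ℝ :=
  MeasureTheory.volume.withDensity fun x => ENNReal.ofReal ((2 * Real.pi)⁻¹ * Real.sqrt (4 - x ^ 2))

/-!
Pulling back along `x ↦ x²`, the transform is `(2π)⁻¹ ∫_{-2}^{2} √(4 - x²) / (x² - z) dx`. For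
`z > 4` the integrand has an explicit primitive built from two arcsines, continuous on `[-2, 2]`,
odd, and equal to `(√(1 - 4/z) - 1) π / 2` at `x = 2`. Hence the integral is `π (√(1 - 4/z) - 1)`,
and `√(1 - 4/z) / 2 = √(1/4 - 1/z)`.
-/

open Real Set

noncomputable def semicircleDensity (x : ℝ) : ℝ := (2 * π)⁻¹ * √(4 - x ^ 2)

lemma semicircleDensity_nonneg (x : ℝ) : 0 ≤ semicircleDensity x := by
  unfold semicircleDensity; positivity

lemma semicircleLaw_eq_withDensity :
    semicircleLaw = volume.withDensity fun x => ENNReal.ofReal (semicircleDensity x) := rfl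

lemma sqrt_four_sub_sq_eq_zero_of_notMem_Icc {x : ℝ} (hx : x ∉ Icc (-2) 2) :
    √(4 - x ^ 2) = 0 := by
  rw [mem_Icc, not_and_or, not_le, not_le] at hx
  apply sqrt_eq_zero_of_nonpos
  rcases hx with hx | hx <;> nlinarith

lemma integral_semicircleLaw (g : ℝ → ℝ) :
    ∫ x, g x ∂semicircleLaw = ∫ x in (-2)..2, semicircleDensity x * g x := by
  have hmeas : Measurable fun x => ENNReal.ofReal (semicircleDensity x) := by
    unfold semicircleDensity; fun_prop
  rw [semicircleLaw_eq_withDensity, integral_withDensity_eq_integral_toReal_smul hmeas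
      (.of_forall fun _ => ENNReal.ofReal_lt_top), intervalIntegral.integral_of_le (by norm_num),
    ← integral_Icc_eq_integral_Ioc, setIntegral_eq_integral_of_forall_compl_eq_zero]
  · refine integral_congr_ae (.of_forall fun x => ?_)
    dsimp only
    rw [ENNReal.toReal_ofReal (semicircleDensity_nonneg x), smul_eq_mul]
  · intro x hx
    simp [semicircleDensity, sqrt_four_sub_sq_eq_zero_of_notMem_Icc hx]

lemma hasDerivAt_div_sqrt_one_sub_sq_div {z x : ℝ} (hx : 0 < 1 - x ^ 2 / z) :
    HasDerivAt (fun y => y / √(1 - y ^ 2 / z)) (√(1 - x ^ 2 / z) ^ 3)⁻¹ x := by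
  have hw : HasDerivAt (fun y => √(1 - y ^ 2 / z)) (-(2 * x / z) / (2 * √(1 - x ^ 2 / z))) x := by
    refine HasDerivAt.sqrt ?_ hx.ne'
    simpa using ((hasDerivAt_pow 2 x).div_const z).const_sub 1
  refine ((hasDerivAt_id' x).div hw (sqrt_pos.2 hx).ne').congr_deriv ?_
  have hw2 := sq_sqrt hx.le
  have hw0 := (sqrt_pos.2 hx).ne'
  field_simp
  rw [hw2]
  ring

/- With `k = √(1 - 4/z)` and `w = √(1 - x²/z)`, the argument `u = k x / (2 w)` of the first arcsin
satisfies `1 - u² = (4 - x²) / (4 w²)` and `u' = k / (2 w³)`; this is what makes the derivative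
collapse to `√(4 - x²) / (x² - z)`. -/
noncomputable def sqStieltjesPrimitive (z x : ℝ) : ℝ :=
  √(1 - 4 / z) * arcsin (√(1 - 4 / z) / 2 * (x / √(1 - x ^ 2 / z))) - arcsin (x / 2)

lemma hasDerivAt_sqStieltjesPrimitive {z x : ℝ} (hz : 4 < z) (hx : x ∈ Ioo (-2) 2) :
    HasDerivAt (sqStieltjesPrimitive z) (√(4 - x ^ 2) / (x ^ 2 - z)) x := by
  obtain ⟨hx₁, hx₂⟩ := hx
  have hxz : x ^ 2 < z := by nlinarith
  have hw : 0 < 1 - x ^ 2 / z := by rw [sub_pos, div_lt_one (by linarith)]; exact hxz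
  have hA : 0 < 4 - x ^ 2 := by nlinarith
  set k := √(1 - 4 / z)
  set w := √(1 - x ^ 2 / z) with hw_def
  set A := √(4 - x ^ 2)
  have hk2 : k ^ 2 = 1 - 4 / z :=
    sq_sqrt (by rw [sub_nonneg, div_le_one (by linarith)]; exact hz.le)
  have hw2 : w ^ 2 = 1 - x ^ 2 / z := sq_sqrt hw.le
  have hA2 : A ^ 2 = 4 - x ^ 2 := sq_sqrt hA.le
  have hw0 : 0 < w := sqrt_pos.2 hw
  have hA0 : 0 < A := sqrt_pos.2 hA
  have hz0 : z ≠ 0 := by positivity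
  set u := k / 2 * (x / w) with hu_def
  have hu : 1 - u ^ 2 = (A / (2 * w)) ^ 2 := by
    rw [hu_def]
    field_simp
    linear_combination 4 * hw2 - x ^ 2 * hk2 - hA2
  have hu_pos : 0 < 1 - u ^ 2 := by rw [hu]; positivity
  have hu₁ : u ≠ -1 := by rintro h; rw [h] at hu_pos; norm_num at hu_pos
  have hu₂ : u ≠ 1 := by rintro h; rw [h] at hu_pos; norm_num at hu_pos
  have harg := (hasDerivAt_div_sqrt_one_sub_sq_div hw).const_mul (k / 2)
  rw [← hw_def] at harg
  have hx₁' : x / 2 ≠ -1 := by intro h; linarith [div_eq_iff (two_ne_zero' ℝ) |>.1 h]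
  have hx₂' : x / 2 ≠ 1 := by intro h; linarith [div_eq_iff (two_ne_zero' ℝ) |>.1 h]
  refine (((hasDerivAt_arcsin hu₁ hu₂).comp x harg).const_mul k |>.sub
    ((hasDerivAt_arcsin hx₁' hx₂').comp x ((hasDerivAt_id' x).div_const 2))).congr_deriv ?_
  have hx_half : 1 - (x / 2) ^ 2 = (A / 2) ^ 2 := by rw [div_pow, div_pow, hA2]; ring
  rw [hu, sqrt_sq (by positivity), hx_half, sqrt_sq (by positivity)]
  have hk2' : k ^ 2 * z = z - 4 := by rw [hk2]; field_simp
  have hw2' : w ^ 2 * z = z - x ^ 2 := by rw [hw2]; field_simp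
  field_simp
  rw [eq_div_iff (by linarith)]
  apply mul_right_cancel₀ hz0
  linear_combination (x ^ 2 - z) * hk2' - (x ^ 2 - z + A ^ 2) * hw2' + (x ^ 2 - z) * hA2

lemma continuousOn_sqStieltjesPrimitive {z : ℝ} (hz : 4 < z) :
    ContinuousOn (sqStieltjesPrimitive z) (Icc (-2) 2) := by
  have hw : ∀ x ∈ Icc (-2 : ℝ) 2, √(1 - x ^ 2 / z) ≠ 0 := fun x ⟨hx₁, hx₂⟩ => by
    refine (sqrt_pos.2 ?_).ne'
    rw [sub_pos, div_lt_one (by linarith)]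
    nlinarith
  unfold sqStieltjesPrimitive
  fun_prop (disch := assumption)

lemma sqStieltjesPrimitive_neg (z x : ℝ) :
    sqStieltjesPrimitive z (-x) = -sqStieltjesPrimitive z x := by
  simp only [sqStieltjesPrimitive, neg_sq, neg_div, mul_neg, arcsin_neg]
  ring

lemma sqStieltjesPrimitive_two {z : ℝ} (hz : 4 < z) :
    sqStieltjesPrimitive z 2 = (√(1 - 4 / z) - 1) * (π / 2) := by
  have hk : 0 < √(1 - 4 / z) := sqrt_pos.2 (by rw [sub_pos, div_lt_one (by linarith)]; exact hz)
  have harg : √(1 - 4 / z) / 2 * (2 / √(1 - 2 ^ 2 / z)) = 1 := by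
    rw [show (2 : ℝ) ^ 2 = 4 by norm_num]
    generalize √(1 - 4 / z) = k at hk ⊢
    field_simp
  rw [sqStieltjesPrimitive, harg, div_self two_ne_zero, arcsin_one]
  ring

lemma integral_sqrt_four_sub_sq_div_sq_sub {z : ℝ} (hz : 4 < z) :
    ∫ x in (-2)..2, √(4 - x ^ 2) / (x ^ 2 - z) = π * (√(1 - 4 / z) - 1) := by
  have hcont : ContinuousOn (fun x => √(4 - x ^ 2) / (x ^ 2 - z)) (uIcc (-2) 2) := by
    have hne : ∀ x ∈ uIcc (-2 : ℝ) 2, x ^ 2 - z ≠ 0 := fun x hx => by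
      rw [uIcc_of_le (by norm_num)] at hx
      nlinarith [hx.1, hx.2]
    fun_prop (disch := assumption)
  rw [intervalIntegral.integral_eq_sub_of_hasDerivAt_of_le (by norm_num)
    (continuousOn_sqStieltjesPrimitive hz) (fun x hx => hasDerivAt_sqStieltjesPrimitive hz hx)
    hcont.intervalIntegrable, sqStieltjesPrimitive_neg, sqStieltjesPrimitive_two hz]
  ring

theorem stieltjes_transform_squared_semicircle (z : ℝ) (hz : 4 < z) :
    ∫ x, (x - z)⁻¹ ∂(semicircleLaw.map fun x : ℝ => x ^ 2)
      = -(1 / 2) + Real.sqrt (1 / 4 - 1 / z) := by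
  rw [integral_map (by fun_prop) (by fun_prop), integral_semicircleLaw]
  have hsqrt : √(1 / 4 - 1 / z) = √(1 - 4 / z) / 2 := by
    rw [show 1 / 4 - 1 / z = (1 - 4 / z) / 2 ^ 2 by ring, sqrt_div' _ (by positivity),
      sqrt_sq zero_le_two]
  calc ∫ x in (-2)..2, semicircleDensity x * (x ^ 2 - z)⁻¹
      = (2 * π)⁻¹ * ∫ x in (-2)..2, √(4 - x ^ 2) / (x ^ 2 - z) := by
        simp only [semicircleDensity, mul_assoc, div_eq_mul_inv]
        exact intervalIntegral.integral_const_mul _ _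
    _ = -(1 / 2) + √(1 / 4 - 1 / z) := by
        rw [integral_sqrt_four_sub_sq_div_sq_sub hz, hsqrt]
        field_simp
        ring
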